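/- Let n ≥ 1 be an integer and let c_{2n} = c_{2n,1}. Then for every t > 0, c_{2n}(t) = Σ_{j=0}^{n−1} C(n−1,j) (−1)^j (2j)! (1 − e^{−t} p_{2j}(t)) / t^{2j+1}, where C(n−1,j) is a binomial coefficient and p_{2j} is the Taylor polynomial of e^t of order 2j centered at t = 0. Equivalently, the Weyl symbol of the inverse of the harmonic oscillator on ℝ^{2n} is b_{2n}(X) = Σ_{j=0}^{n−1} C(n−1,j) (−1)^j (2j)! (1 − e^{−|X|²} p_{2j}(|X|²)) / |X|^{2+4j}. -/

import Mathlib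

open scoped Nat

/-- The function `c_{d,α}` of the paper: the candidate (rescaled radial profile of the)
Weyl symbol of the inverse of the harmonic oscillator, depending on a parameter `α`. -/
noncomputable def cda (d : ℕ) (α : ℝ) (t : ℝ) : ℝ :=
  ((d‼ : ℝ) / d) *
    (α * (∑' p : ℕ, t ^ (2*p) / (((2*p)‼ * (2*p + d - 1)‼ : ℕ) : ℝ)) -
      ∑' p : ℕ, t ^ (2*p+1) / (((2*p+1)‼ * (2*p + d)‼ : ℕ) : ℝ))

/-- `taylorExp k t` is the Taylor polynomial of `e^t` of order `k` centered at `0`. -/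
noncomputable def taylorExp (k : ℕ) (t : ℝ) : ℝ :=
  ∑ i ∈ Finset.range (k + 1), t ^ i / (i ! : ℝ)

/-!
Expanding `1 - e^{-t} p_k(t) = (1/k!) ∫₀ᵗ s^k e^{-s} ds` in powers of `t` gives
`(2j)! (1 - e^{-t} p_{2j}(t)) / t^{2j+1} = ∑ₘ (-t)^m / (m! (2j+1+m))`. Summing against
`C(N,j) (-1)^j` leaves, for each `m`, the alternating sum `∑ⱼ C(N,j) (-1)^j / (m+1+2j)`, an
`N`-th forward difference of `x ↦ 1/x` with step `2`, equal to `2^N N! / ∏_{i ≤ N} (m+1+2i)`.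
Since `m! ∏_{i ≤ N} (m+1+2i) = m‼ (m+2N+1)‼`, this is `2^N N! = (2N+2)‼/(2N+2)` times
`∑ₘ (-t)^m / (m‼ (m+2N+1)‼)`, whose even and odd parts are the two series defining `c_{2N+2,1}`.
-/

open Finset

theorem hasSum_pow_div_factorial_exp (x : ℝ) :
    HasSum (fun n : ℕ => x ^ n / n !) (Real.exp x) := by
  rw [Real.exp_eq_exp_ℝ]
  exact NormedSpace.expSeries_div_hasSum_exp x

theorem hasSum_one_sub_exp_neg_mul_taylorExp (t : ℝ) (k : ℕ) :
    HasSum (fun m : ℕ => t ^ (k + 1) * (-t) ^ m / (k ! * m ! * (k + 1 + m)))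
      (1 - Real.exp (-t) * taylorExp k t) := by
  have hexp := hasSum_pow_div_factorial_exp (-t)
  induction k with
  | zero =>
    rw [show 1 - Real.exp (-t) * taylorExp 0 t = -(_ - ∑ i ∈ range 1, _) from ?_]
    · refine ((hasSum_nat_add_iff' 1).mpr hexp).neg.congr_fun fun m => ?_
      push_cast [Nat.factorial_succ]
      field_simp
      ring
    · simp [taylorExp]
  | succ k ih =>
    -- Subtracting `e^{-t} t^(k+1)/(k+1)!` as a series kills the constant term of the series for
    -- `k`, and what remains, shifted by one, is the series for `k + 1`.
    rw [show 1 - Real.exp (-t) * taylorExp (k + 1) t = _ - ∑ i ∈ range 1, _ from ?_]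
    · refine ((hasSum_nat_add_iff' 1).mpr
        (ih.sub (hexp.mul_right (t ^ (k + 1) / (k + 1)!)))).congr_fun fun m => ?_
      push_cast [Nat.factorial_succ]
      field_simp
      ring
    · simp [taylorExp, sum_range_succ _ (k + 1), Nat.factorial_succ]
      field_simp
      ring

theorem hasSum_factorial_mul_one_sub_exp_neg_mul_taylorExp_div {t : ℝ} (ht : t ≠ 0) (k : ℕ) :
    HasSum (fun m : ℕ => (-t) ^ m / (m ! * (k + 1 + m)))
      (k ! * (1 - Real.exp (-t) * taylorExp k t) / t ^ (k + 1)) := by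
  rw [mul_div_right_comm]
  refine ((hasSum_one_sub_exp_neg_mul_taylorExp t k).mul_left (k ! / t ^ (k + 1))).congr_fun
    fun m => ?_
  field_simp

theorem fwdDiff_iter_inv {𝕜 : Type*} [Field 𝕜] (h : 𝕜) (N : ℕ) (x : 𝕜)
    (hx : ∀ i ∈ range (N + 1), x + i * h ≠ 0) :
    (fwdDiff h)^[N] (fun y => y⁻¹) x =
      (-1) ^ N * N ! * h ^ N / ∏ i ∈ range (N + 1), (x + i * h) := by
  induction N generalizing x with
  | zero => simp
  | succ N ih =>
    have hlow : ∏ i ∈ range (N + 2), (x + i * h)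
        = (∏ i ∈ range (N + 1), (x + h + i * h)) * x := by
      rw [prod_range_succ']
      push_cast
      congr 1
      · exact prod_congr rfl fun i _ => by ring
      · simp
    have hhigh : ∏ i ∈ range (N + 2), (x + i * h)
        = (∏ i ∈ range (N + 1), (x + i * h)) * (x + (N + 1) * h) := by
      rw [prod_range_succ]; push_cast; ring
    have hP : ∏ i ∈ range (N + 2), (x + i * h) ≠ 0 := prod_ne_zero_iff.mpr hx
    have hx0 : x ≠ 0 := by simpa using hx 0
    have hPx : ∏ i ∈ range (N + 1), (x + i * h) ≠ 0 := left_ne_zero_of_mul (hhigh ▸ hP)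
    have hPxh : ∏ i ∈ range (N + 1), (x + h + i * h) ≠ 0 := left_ne_zero_of_mul (hlow ▸ hP)
    rw [Function.iterate_succ_apply', fwdDiff, ih x (prod_ne_zero_iff.mp hPx),
      ih (x + h) (prod_ne_zero_iff.mp hPxh), hlow]
    rw [hlow] at hhigh
    rw [div_sub_div _ _ hPxh hPx, div_eq_div_iff (mul_ne_zero hPxh hPx) (mul_ne_zero hPxh hx0)]
    push_cast [Nat.factorial_succ]
    linear_combination (-((-1) ^ N * N ! * h ^ N) * ∏ i ∈ range (N + 1), (x + h + i * h)) * hhigh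

theorem sum_choose_mul_neg_one_pow_div {𝕜 : Type*} [Field 𝕜] (h : 𝕜) (N : ℕ) (x : 𝕜)
    (hx : ∀ i ∈ range (N + 1), x + i * h ≠ 0) :
    ∑ j ∈ range (N + 1), (N.choose j : 𝕜) * (-1) ^ j / (x + j * h) =
      N ! * h ^ N / ∏ i ∈ range (N + 1), (x + i * h) := by
  have hdiff := fwdDiff_iter_eq_sum_shift h (fun y : 𝕜 => y⁻¹) N x
  rw [fwdDiff_iter_inv h N x hx] at hdiff
  calc ∑ j ∈ range (N + 1), (N.choose j : 𝕜) * (-1) ^ j / (x + j * h)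
      = (-1) ^ N * ∑ j ∈ range (N + 1), ((-1 : ℤ) ^ (N - j) * N.choose j) • (x + j • h)⁻¹ := by
        rw [mul_sum]
        refine sum_congr rfl fun j hj => ?_
        have hsplit : (-1 : 𝕜) ^ N = (-1) ^ (N - j) * (-1) ^ j := by
          rw [← pow_add, Nat.sub_add_cancel (Nat.lt_succ_iff.mp (mem_range.mp hj))]
        have hsq : ((-1 : 𝕜) ^ (N - j)) ^ 2 = 1 := by
          rw [← pow_mul, mul_comm, pow_mul]; norm_num
        rw [zsmul_eq_mul, nsmul_eq_mul, hsplit]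
        push_cast
        linear_combination (-(N.choose j * (-1) ^ j / (x + j * h) : 𝕜)) * hsq
    _ = N ! * h ^ N / ∏ i ∈ range (N + 1), (x + i * h) := by
        rw [← hdiff, ← mul_div_assoc, ← mul_assoc, ← mul_assoc, ← pow_add, ← two_mul, pow_mul]
        norm_num

theorem Nat.doubleFactorial_mul_doubleFactorial_add_eq_factorial_mul_prod (m N : ℕ) :
    m‼ * (m + 2 * N + 1)‼ = m ! * ∏ i ∈ range (N + 1), (m + 1 + 2 * i) := by
  induction N with
  | zero => simp [mul_comm m‼, ← Nat.factorial_eq_mul_doubleFactorial, Nat.factorial_succ]; ring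
  | succ N ih =>
    rw [prod_range_succ, ← mul_assoc, ← ih, show m + 2 * (N + 1) + 1 = m + 2 * N + 1 + 2 by ring,
      Nat.doubleFactorial_add_two]
    ring

theorem summable_neg_pow_div_doubleFactorial_mul (N : ℕ) (t : ℝ) :
    Summable fun m : ℕ => (-t) ^ m / ((m‼ * (m + 2 * N + 1)‼ : ℕ) : ℝ) := by
  refine .of_norm_bounded (Real.summable_pow_div_factorial |t|) fun m => ?_
  have hle : m ! ≤ m‼ * (m + 2 * N + 1)‼ := by
    rw [Nat.doubleFactorial_mul_doubleFactorial_add_eq_factorial_mul_prod]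
    exact Nat.le_mul_of_pos_right _ (prod_pos fun i _ => by omega)
  rw [norm_div, norm_pow, norm_neg, Real.norm_natCast, Real.norm_eq_abs]
  gcongr

theorem cda_two_mul_succ_one_eq_tsum (N : ℕ) (t : ℝ) :
    cda (2 * (N + 1)) 1 t =
      2 ^ N * N ! * ∑' m : ℕ, (-t) ^ m / ((m‼ * (m + 2 * N + 1)‼ : ℕ) : ℝ) := by
  have hcoef : ((2 * (N + 1))‼ : ℝ) / (2 * (N + 1) : ℕ) = 2 ^ N * N ! := by
    rw [Nat.doubleFactorial_two_mul]
    push_cast [Nat.factorial_succ, pow_succ]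
    field_simp
  have hf := summable_neg_pow_div_doubleFactorial_mul N t
  rw [cda, hcoef, one_mul, sub_eq_add_neg, ← tsum_neg,
    ← tsum_even_add_odd (f := fun m : ℕ => (-t) ^ m / ((m‼ * (m + 2 * N + 1)‼ : ℕ) : ℝ))
      (hf.comp_injective fun a b h => by simpa using h)
      (hf.comp_injective (i := fun p => 2 * p + 1) fun a b h => by simpa using h)]
  congr 2 <;> refine tsum_congr fun p => ?_
  · rw [Even.neg_pow (even_two_mul p), show 2 * p + 2 * (N + 1) - 1 = 2 * p + 2 * N + 1 by omega]
  · rw [Odd.neg_pow (odd_two_mul_add_one p), neg_div,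
      show 2 * p + 2 * (N + 1) = 2 * p + 1 + 2 * N + 1 by ring]

theorem hasSum_sum_choose_mul_one_sub_exp_neg_mul_taylorExp {t : ℝ} (ht : t ≠ 0) (N : ℕ) :
    HasSum (fun m : ℕ => 2 ^ N * N ! * ((-t) ^ m / ((m‼ * (m + 2 * N + 1)‼ : ℕ) : ℝ)))
      (∑ j ∈ range (N + 1), (N.choose j : ℝ) * (-1) ^ j * (2 * j)! *
        (1 - Real.exp (-t) * taylorExp (2 * j) t) / t ^ (2 * j + 1)) := by
  have hj := fun j (_ : j ∈ range (N + 1)) =>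
    (hasSum_factorial_mul_one_sub_exp_neg_mul_taylorExp_div ht (2 * j)).mul_left
      ((N.choose j : ℝ) * (-1) ^ j)
  rw [show ∑ j ∈ range (N + 1), (N.choose j : ℝ) * (-1) ^ j * (2 * j)! *
      (1 - Real.exp (-t) * taylorExp (2 * j) t) / t ^ (2 * j + 1) = _ from
    sum_congr rfl fun j _ => by rw [mul_assoc, mul_div_assoc]]
  refine (hasSum_sum hj).congr_fun fun m => ?_
  have hx : ∀ i ∈ range (N + 1), (m : ℝ) + 1 + i * 2 ≠ 0 := fun i _ => by positivity
  rw [Nat.doubleFactorial_mul_doubleFactorial_add_eq_factorial_mul_prod]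
  push_cast
  calc (2 : ℝ) ^ N * N ! * ((-t) ^ m / (m ! * ∏ i ∈ range (N + 1), ((m : ℝ) + 1 + 2 * i)))
      = (-t) ^ m / m ! * (N ! * 2 ^ N / ∏ i ∈ range (N + 1), ((m + 1 : ℝ) + i * 2)) := by
        rw [prod_congr rfl fun (i : ℕ) _ => show (m : ℝ) + 1 + 2 * (i : ℝ) = m + 1 + i * 2 by ring]
        ring
    _ = _ := by
        rw [← sum_choose_mul_neg_one_pow_div (2 : ℝ) N (m + 1) hx, mul_sum]
        refine sum_congr rfl fun j _ => ?_
        field_simp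
        ring

theorem cda_two_mul_succ_one_eq_sum (N : ℕ) {t : ℝ} (ht : t ≠ 0) :
    cda (2 * (N + 1)) 1 t = ∑ j ∈ range (N + 1), (N.choose j : ℝ) * (-1) ^ j * (2 * j)! *
        (1 - Real.exp (-t) * taylorExp (2 * j) t) / t ^ (2 * j + 1) := by
  rw [cda_two_mul_succ_one_eq_tsum, ← tsum_mul_left]
  exact (hasSum_sum_choose_mul_one_sub_exp_neg_mul_taylorExp ht N).tsum_eq

theorem stmt17 (n : ℕ) (hn : 1 ≤ n) :
    (∀ t : ℝ, 0 < t →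
      cda (2*n) 1 t = ∑ j ∈ Finset.range n,
        ((n - 1).choose j : ℝ) * (-1 : ℝ) ^ j * ((2*j)! : ℝ) *
          (1 - Real.exp (-t) * taylorExp (2*j) t) / t ^ (2*j + 1)) ∧
    (∀ X : EuclideanSpace ℝ (Fin (2 * (2*n))), X ≠ 0 →
      cda (2*n) 1 (‖X‖^2) = ∑ j ∈ Finset.range n,
        ((n - 1).choose j : ℝ) * (-1 : ℝ) ^ j * ((2*j)! : ℝ) *
          (1 - Real.exp (-‖X‖^2) * taylorExp (2*j) (‖X‖^2)) / ‖X‖ ^ (2 + 4*j)) := by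
  obtain ⟨N, rfl⟩ : ∃ N, n = N + 1 := ⟨n - 1, by omega⟩
  simp only [Nat.add_sub_cancel]
  refine ⟨fun t ht => cda_two_mul_succ_one_eq_sum N ht.ne', fun X hX => ?_⟩
  rw [cda_two_mul_succ_one_eq_sum N (pow_ne_zero 2 (norm_ne_zero_iff.mpr hX))]
  refine sum_congr rfl fun j _ => ?_
  rw [show 2 + 4 * j = 2 * (2 * j + 1) by ring, pow_mul]
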